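/- arXiv:2101.04937 — 4 statements merged into one kernel-verified Lean document; each statement's English description precedes it below -/
import Mathlib

section
/- Let p > 5 be a prime, let D₁ and D₂ be negative integers with √(3p) < −D₁, −D₁ < −D₂ and −D₂ < (4/√3)·√p, and let x be a positive integer with D₁·D₂ − x² = 4p. Then 2x < −D₁; consequently f(X,Y) = −D₁X² − 2xXY − D₂Y² is a reduced positive definite integral binary quadratic form (its coefficients satisfy 0 < |−2x| < −D₁ < −D₂) and its discriminant (−2x)² − 4·(−D₁)·(−D₂) equals −16p. -/
/-- Let `p > 5` be prime, `D₁, D₂` negative integers with `√(3p) < −D₁`, `−D₁ < −D₂`,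
`−D₂ < (4/√3)·√p`, and `x` a positive integer with `D₁·D₂ − x² = 4p`. Then `2x < −D₁`;
consequently the coefficients of `f(X,Y) = −D₁X² − 2xXY − D₂Y²` satisfy
`0 < |−2x| < −D₁ < −D₂` (so `f` is a reduced positive definite form) and its
discriminant `(−2x)² − 4(−D₁)(−D₂)` equals `−16p`. -/
theorem reduced_form_of_common_root (p : ℕ) (hp : p.Prime) (hp5 : 5 < p)
    (D₁ D₂ : ℤ) (hD₁ : D₁ < 0) (hD₂ : D₂ < 0)
    (hlb : Real.sqrt (3 * p) < (-D₁ : ℤ))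
    (h₁₂ : -D₁ < -D₂)
    (hub : ((-D₂ : ℤ) : ℝ) < 4 / Real.sqrt 3 * Real.sqrt p)
    (x : ℤ) (hx : 0 < x) (heq : D₁ * D₂ - x ^ 2 = 4 * p) :
    2 * x < -D₁ ∧
      (0 < |(-2) * x| ∧ |(-2) * x| < -D₁ ∧ -D₁ < -D₂) ∧
      ((-2) * x) ^ 2 - 4 * (-D₁) * (-D₂) = -16 * (p : ℤ) := by
  have hmain : 2 * x < -D₁ := by
    by_contra h
    push_neg at h
    have h4 : ((-D₁ : ℤ) : ℝ) ^ 2 ≤ ((2 * x : ℤ) : ℝ) ^ 2 := by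
      have : (-D₁)^2 ≤ (2*x)^2 := by nlinarith
      exact_mod_cast this
    have hs3 : (0:ℝ) < Real.sqrt 3 := Real.sqrt_pos.mpr (by norm_num)
    have h3 : Real.sqrt 3 ^ 2 = 3 := Real.sq_sqrt (by norm_num)
    have hpr : Real.sqrt p ^ 2 = p := Real.sq_sqrt (by positivity)
    have hpp : (0:ℝ) < p := by exact_mod_cast hp.pos
    set u : ℝ := 4 / Real.sqrt 3 * Real.sqrt p with hu
    have hu2 : u ^ 2 = 16 / 3 * p := by
      rw [hu, mul_pow, div_pow, h3, hpr]; ring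
    set t : ℝ := ((-D₁ : ℤ) : ℝ) with ht
    set s : ℝ := ((-D₂ : ℤ) : ℝ) with hs
    have hts : t < s := by rw [ht, hs]; exact_mod_cast h₁₂
    have hsu : s < u := hub
    have htpos : (0:ℝ) < t := by
      rw [ht]
      have : (0:ℤ) < -D₁ := by linarith
      exact_mod_cast this
    have hupos : (0:ℝ) < u := lt_trans (lt_trans htpos hts) hsu
    have hcast : ((2 * x : ℤ) : ℝ) ^ 2 = 4 * (t * s) - 16 * p := by
      rw [ht, hs]
      have hz : ((2 * x)^2 : ℤ) = 4 * ((-D₁) * (-D₂)) - 16 * (p:ℤ) := by nlinarith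
      exact_mod_cast hz
    have hlt : t ^ 2 < 4 * t * u - 16 * p := by
      have : t * s < t * u := by exact mul_lt_mul_of_pos_left hsu htpos
      nlinarith
    nlinarith [mul_pos (sub_pos.mpr (lt_trans hts hsu)) (sub_pos.mpr (by nlinarith : t < 3 * u)), hu2]
  refine ⟨hmain, ⟨?_, ?_, h₁₂⟩, ?_⟩
  · rw [abs_pos]; intro hc; omega
  · have : |(-2) * x| = 2 * x := by rw [abs_of_nonpos (by linarith)]; ring
    rw [this]; exact hmain
  · nlinarith
end

section
/- Let p be a positive real number, let x be a real number with 0 ≤ x and x² < (4/3)·p, and let a, b be positive real numbers with a·b = 4p + x². Then a + b − 2x > (4/√3)·√p. -/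
/-- Let `p > 0` be real, `x` real with `0 ≤ x` and `x² < (4/3)p`, and `a, b > 0` real
with `ab = 4p + x²`. Then `a + b − 2x > (4/√3)·√p`. -/
theorem sum_sub_double_gt (p x a b : ℝ) (hp : 0 < p)
    (hx0 : 0 ≤ x) (hx : x ^ 2 < 4 / 3 * p)
    (ha : 0 < a) (hb : 0 < b) (hab : a * b = 4 * p + x ^ 2) :
    a + b - 2 * x > 4 / Real.sqrt 3 * Real.sqrt p := by
  have hs3 : (0:ℝ) < Real.sqrt 3 := Real.sqrt_pos.mpr (by norm_num)
  have hs3sq : Real.sqrt 3 ^ 2 = 3 := Real.sq_sqrt (by norm_num)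
  have hsp : 0 < Real.sqrt p := Real.sqrt_pos.mpr hp
  have hspsq : Real.sqrt p ^ 2 = p := Real.sq_sqrt hp.le
  have hxlt : x < 2 / Real.sqrt 3 * Real.sqrt p := by
    apply lt_of_pow_lt_pow_left₀ 2 (by positivity)
    have : (2 / Real.sqrt 3 * Real.sqrt p) ^ 2 = 4 / 3 * p := by
      field_simp
      nlinarith [hs3sq, hspsq]
    rw [this]; exact hx
  have ht : (2 / Real.sqrt 3 * Real.sqrt p) ^ 2 = 4 / 3 * p := by
    field_simp
    nlinarith [hs3sq, hspsq]
  have key : x + 2 / Real.sqrt 3 * Real.sqrt p < Real.sqrt (4 * p + x ^ 2) := by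
    rw [show ((4:ℝ) * p + x ^ 2) = (4 * p + x ^ 2) from rfl]
    refine (Real.lt_sqrt (by positivity)).mpr ?_
    nlinarith [ht, hxlt, mul_pos hs3 hsp, hx0]
  have hsa : Real.sqrt a ^ 2 = a := Real.sq_sqrt ha.le
  have hsb : Real.sqrt b ^ 2 = b := Real.sq_sqrt hb.le
  have hmul : Real.sqrt a * Real.sqrt b = Real.sqrt (a * b) :=
    (Real.sqrt_mul ha.le b).symm
  have hamgm : 2 * Real.sqrt (a * b) ≤ a + b := by
    nlinarith [sq_nonneg (Real.sqrt a - Real.sqrt b)]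
  rw [hab] at hamgm
  have h4 : 4 / Real.sqrt 3 * Real.sqrt p = 2 * (2 / Real.sqrt 3 * Real.sqrt p) := by ring
  linarith [key, hamgm]
end

section
/- Let p > 5 be a prime, let D₁ and D₂ be negative integers with √(3p) < −D₁, −D₁ < −D₂ and −D₂ < (4/√3)·√p, and let x be a positive integer with D₁·D₂ − x² = 4p. Then for all integers X, Y with X ≠ 0 and Y ≠ 0, one has −D₁·X² − 2x·X·Y − D₂·Y² > (4/√3)·√p. -/
set_option maxHeartbeats 1000000

private lemma form_aux (a c t B q : ℝ) (X Y : ℤ) (hXne : X ≠ 0) (hYne : Y ≠ 0)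
    (hp0 : 0 < q) (hA0 : 0 < a) (hAC : a < c) (hCB : c < B) (hT0 : 0 < t)
    (hB0 : 0 < B) (hBsq : B ^ 2 = 16 * q / 3)
    (hprod : a * c = t ^ 2 + 4 * q)
    (hcon : a * (X:ℝ)^2 - 2 * t * X * Y + c * (Y:ℝ)^2 ≤ B) : False := by
  have hC0 : (0:ℝ) < c := hA0.trans hAC
  have hAB : a < B := hAC.trans hCB
  have hY2 : ((Y:ℝ))^2 < 4/3 := by
    have h1 : a * (a * (X:ℝ)^2 - 2 * t * X * Y + c * (Y:ℝ)^2) ≤ a * B :=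
      mul_le_mul_of_nonneg_left hcon hA0.le
    nlinarith [sq_nonneg (a * (X:ℝ) - t * Y), hBsq, hprod]
  have hX2 : ((X:ℝ))^2 < 4/3 := by
    have h1 : c * (a * (X:ℝ)^2 - 2 * t * X * Y + c * (Y:ℝ)^2) ≤ c * B :=
      mul_le_mul_of_nonneg_left hcon hC0.le
    nlinarith [sq_nonneg (c * (Y:ℝ) - t * X), hBsq, hprod]
  have hY1 : Y ^ 2 = 1 := by
    have h2 : (Y:ℤ)^2 < 2 := by exact_mod_cast (by push_cast; linarith : ((Y^2 : ℤ):ℝ) < 2)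
    have h3 : 1 ≤ Y ^ 2 := by rcases hYne.lt_or_gt with h | h <;> nlinarith
    omega
  have hX1 : X ^ 2 = 1 := by
    have h2 : (X:ℤ)^2 < 2 := by exact_mod_cast (by push_cast; linarith : ((X^2 : ℤ):ℝ) < 2)
    have h3 : 1 ≤ X ^ 2 := by rcases hXne.lt_or_gt with h | h <;> nlinarith
    omega
  have hX1' : ((X:ℝ))^2 = 1 := by exact_mod_cast hX1
  have hY1' : ((Y:ℝ))^2 = 1 := by exact_mod_cast hY1
  have hXY : (X:ℝ) * Y ≤ 1 := by
    nlinarith [sq_nonneg ((X:ℝ) * Y - 1), sq_nonneg ((X:ℝ) * Y + 1)]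
  have hm : a + c - 2 * t ≤ B := by nlinarith [hcon, hX1', hY1', hXY, hT0]
  have h1 : (a - t)^2 < 4 * q / 3 := by
    have := mul_le_mul_of_nonneg_left hm hA0.le
    nlinarith [hprod, hBsq]
  have h2 : (c - t)^2 < 4 * q / 3 := by
    have := mul_le_mul_of_nonneg_left hm hC0.le
    nlinarith [hprod, hBsq]
  have h3 : t^2 < 4 * q / 3 := by nlinarith [hprod, hBsq]
  have h5 : (a - t) * (c - t) < 4 * q / 3 := by
    nlinarith [sq_nonneg ((a - t) - (c - t))]
  have h6 : 8 * q / 3 < t * (a + c - 2 * t) := by nlinarith [hprod]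
  have h7 : t * (a + c - 2 * t) ≤ t * B := mul_le_mul_of_nonneg_left hm hT0.le
  have h8 : t * B < 8 * q / 3 := by
    nlinarith [mul_pos hT0 hB0, h3, hBsq]
  linarith

/-- Let `p > 5` be prime, `D₁, D₂` negative integers with `√(3p) < −D₁`, `−D₁ < −D₂`,
`−D₂ < (4/√3)·√p`, and `x` a positive integer with `D₁·D₂ − x² = 4p`. Then for all
nonzero integers `X, Y`, one has `−D₁X² − 2xXY − D₂Y² > (4/√3)·√p`. -/
theorem form_value_gt_bound (p : ℕ) (hp : p.Prime) (hp5 : 5 < p)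
    (D₁ D₂ : ℤ) (hD₁ : D₁ < 0) (hD₂ : D₂ < 0)
    (hlb : Real.sqrt (3 * p) < (-D₁ : ℤ))
    (h₁₂ : -D₁ < -D₂)
    (hub : ((-D₂ : ℤ) : ℝ) < 4 / Real.sqrt 3 * Real.sqrt p)
    (x : ℤ) (hx : 0 < x) (heq : D₁ * D₂ - x ^ 2 = 4 * p) :
    ∀ X Y : ℤ, X ≠ 0 → Y ≠ 0 →
      ((-D₁ * X ^ 2 - 2 * x * X * Y - D₂ * Y ^ 2 : ℤ) : ℝ) >
        4 / Real.sqrt 3 * Real.sqrt p := by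
  intro X Y hXne hYne
  by_contra hcon
  push_neg at hcon
  have hp0 : (0:ℝ) < p := by positivity
  have hsppos : (0:ℝ) < Real.sqrt p := Real.sqrt_pos.mpr hp0
  have hs3 : (0:ℝ) < Real.sqrt 3 := Real.sqrt_pos.mpr (by norm_num)
  have hB0 : (0:ℝ) < 4 / Real.sqrt 3 * Real.sqrt p := by positivity
  have hBsq : (4 / Real.sqrt 3 * Real.sqrt p) ^ 2 = 16 * p / 3 := by
    rw [mul_pow, div_pow, Real.sq_sqrt (by norm_num : (0:ℝ) ≤ 3),
      Real.sq_sqrt hp0.le]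
    ring
  have hA0 : (0:ℝ) < -(D₁:ℝ) := by
    have h := hlb
    push_cast at h
    exact lt_of_le_of_lt (Real.sqrt_nonneg _) h
  have hAC : -(D₁:ℝ) < -(D₂:ℝ) := by exact_mod_cast h₁₂
  have hCB : -(D₂:ℝ) < 4 / Real.sqrt 3 * Real.sqrt p := by
    push_cast at hub; linarith
  have hT0 : (0:ℝ) < (x:ℝ) := by exact_mod_cast hx
  have hprod : -(D₁:ℝ) * -(D₂:ℝ) = (x:ℝ) ^ 2 + 4 * p := by
    have h : ((D₁:ℝ)) * D₂ - (x:ℝ) ^ 2 = 4 * p := by exact_mod_cast heq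
    nlinarith [h]
  have hcon' : -(D₁:ℝ) * (X:ℝ)^2 - 2 * (x:ℝ) * X * Y + -(D₂:ℝ) * (Y:ℝ)^2
      ≤ 4 / Real.sqrt 3 * Real.sqrt p := by
    push_cast at hcon
    linarith
  exact form_aux (-(D₁:ℝ)) (-(D₂:ℝ)) (x:ℝ) (4 / Real.sqrt 3 * Real.sqrt p) (p:ℝ)
    X Y hXne hYne hp0 hA0 hAC hCB hT0 hB0 hBsq hprod hcon'
end

section
/- Let p and q be prime numbers with q odd, let r be an integer with q dividing r² + p, let D be a negative integer with −D < p, and let w, x, y, z be integers satisfying (as rational numbers) 2w + x = −D and (w + x/2)² + (p/4)·y² + q·(x/2 + z·r/q)² + p·q·(y/2 + z/q)² = (D² − D)/4. Then y = 0 and q·x² + 4·r·x·z + (4·(r² + p)/q)·z² = −D. -/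
/-!
Writing `t = 2w + x` for the trace, the first summand of the norm is `t²/4`, so the remaining
three summands add up to `t/4`. Clearing the denominator `4q` turns this into the integer identity
`pqy² + (qx + 2rz)² + p(qy + 2z)² = tq`. All summands on the left are nonnegative, so
`pqy² ≤ tq < pq` when `t < p`, which forces `y = 0`; the identity then reads
`(qx + 2rz)² + 4pz² = tq`, and `q·g(x, z) = (qx + 2rz)² + 4pz²` for the binary form `g`.
-/

section Field

variable {K : Type*} [Field K]

theorem four_mul_pure_norm_eq [CharZero K] {p q x y z r : K} (hq : q ≠ 0) :
    4 * q * ((p / 4) * y ^ 2 + q * (x / 2 + z * r / q) ^ 2 + p * q * (y / 2 + z / q) ^ 2) =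
      p * q * y ^ 2 + (q * x + 2 * z * r) ^ 2 + p * (q * y + 2 * z) ^ 2 := by
  field_simp
  ring

theorem sq_add_mul_sq_eq_of_trace_norm [CharZero K] {p q r t w x y z : K} (hq : q ≠ 0)
    (htr : 2 * w + x = t)
    (hnrd : (w + x / 2) ^ 2 + (p / 4) * y ^ 2 + q * (x / 2 + z * r / q) ^ 2
        + p * q * (y / 2 + z / q) ^ 2 = (t ^ 2 + t) / 4) :
    p * q * y ^ 2 + (q * x + 2 * z * r) ^ 2 + p * (q * y + 2 * z) ^ 2 = t * q := by
  have hw : w + x / 2 = t / 2 := by linear_combination htr / 2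
  rw [← four_mul_pure_norm_eq hq]
  rw [hw] at hnrd
  linear_combination 4 * q * hnrd

theorem mul_binaryForm_eq {p q r x z : K} (hq : q ≠ 0) :
    q * (q * x ^ 2 + 4 * r * x * z + (4 * (r ^ 2 + p) / q) * z ^ 2) =
      (q * x + 2 * z * r) ^ 2 + p * (2 * z) ^ 2 := by
  field_simp
  ring

end Field

theorem Int.eq_zero_of_mul_sq_add_sq_add_mul_sq_eq {p q t y a b : ℤ} (hp : 0 < p) (hq : 0 < q)
    (htp : t < p) (h : p * q * y ^ 2 + a ^ 2 + p * b ^ 2 = t * q) : y = 0 := by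
  have hlt : p * q * y ^ 2 < p * q * 1 := by nlinarith [sq_nonneg a, sq_nonneg b]
  have hy : y ^ 2 < 1 := lt_of_mul_lt_mul_left hlt (by positivity)
  nlinarith [sq_nonneg y]

theorem quaternion_trace_norm_equations_general (p q : ℕ) (hp : p.Prime) (hq : q.Prime)
    (r : ℤ)
    (D : ℤ) (hDp : -D < (p : ℤ))
    (w x y z : ℤ)
    (h1 : (2 * w + x : ℚ) = -(D : ℚ))
    (h2 : ((w : ℚ) + (x : ℚ) / 2) ^ 2 + ((p : ℚ) / 4) * (y : ℚ) ^ 2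
        + (q : ℚ) * ((x : ℚ) / 2 + (z : ℚ) * (r : ℚ) / (q : ℚ)) ^ 2
        + (p : ℚ) * (q : ℚ) * ((y : ℚ) / 2 + (z : ℚ) / (q : ℚ)) ^ 2
        = ((D : ℚ) ^ 2 - (D : ℚ)) / 4) :
    y = 0 ∧
      (q : ℚ) * (x : ℚ) ^ 2 + 4 * (r : ℚ) * (x : ℚ) * (z : ℚ)
        + (4 * ((r : ℚ) ^ 2 + (p : ℚ)) / (q : ℚ)) * (z : ℚ) ^ 2 = -(D : ℚ) := by
  have hq0 : (q : ℚ) ≠ 0 := by exact_mod_cast hq.ne_zero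
  have hkeyℚ := sq_add_mul_sq_eq_of_trace_norm hq0 h1 (by rw [h2]; ring)
  have hkey : (p : ℤ) * q * y ^ 2 + (q * x + 2 * z * r) ^ 2 + p * (q * y + 2 * z) ^ 2
      = -D * q := by exact_mod_cast hkeyℚ
  have hy : y = 0 := Int.eq_zero_of_mul_sq_add_sq_add_mul_sq_eq (by exact_mod_cast hp.pos)
    (by exact_mod_cast hq.pos) hDp hkey
  refine ⟨hy, mul_left_cancel₀ hq0 ?_⟩
  rw [mul_binaryForm_eq hq0]
  subst hy
  push_cast at hkeyℚ
  linear_combination hkeyℚ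

/-- Let `p, q` be primes with `q` odd, `r` an integer with `q ∣ r² + p`, `D` a negative
integer with `−D < p`, and `w, x, y, z` integers satisfying (in `ℚ`) `2w + x = −D` and
`(w + x/2)² + (p/4)y² + q(x/2 + zr/q)² + pq(y/2 + z/q)² = (D² − D)/4`. Then `y = 0` and
`qx² + 4rxz + (4(r² + p)/q)z² = −D`. -/
theorem quaternion_trace_norm_equations (p q : ℕ) (hp : p.Prime) (hq : q.Prime)
    (hqodd : Odd q) (r : ℤ) (hdvd : (q : ℤ) ∣ r ^ 2 + (p : ℤ))
    (D : ℤ) (hD : D < 0) (hDp : -D < (p : ℤ))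
    (w x y z : ℤ)
    (h1 : (2 * w + x : ℚ) = -(D : ℚ))
    (h2 : ((w : ℚ) + (x : ℚ) / 2) ^ 2 + ((p : ℚ) / 4) * (y : ℚ) ^ 2
        + (q : ℚ) * ((x : ℚ) / 2 + (z : ℚ) * (r : ℚ) / (q : ℚ)) ^ 2
        + (p : ℚ) * (q : ℚ) * ((y : ℚ) / 2 + (z : ℚ) / (q : ℚ)) ^ 2
        = ((D : ℚ) ^ 2 - (D : ℚ)) / 4) :
    y = 0 ∧
      (q : ℚ) * (x : ℚ) ^ 2 + 4 * (r : ℚ) * (x : ℚ) * (z : ℚ)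
        + (4 * ((r : ℚ) ^ 2 + (p : ℚ)) / (q : ℚ)) * (z : ℚ) ^ 2 = -(D : ℚ) :=
  quaternion_trace_norm_equations_general p q hp hq r D hDp w x y z h1 h2
end
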